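/- arXiv:2312.01804 — 5 statements merged into one kernel-verified Lean document; each statement's English description precedes it below -/
import Mathlib

section
/- Let G = (V, A) be a directed acyclic graph with set of sources S. Then there exists an allocation π of items to two agents such that δ_π(1) ≤ ⌈|S|/2⌉ and δ_π(2) ≤ ⌈|S|/2⌉. Hence the optimal min-max dissatisfaction for two agents with common preference graph G equals exactly ⌈|S|/2⌉. -/
/-- `u` is dominated by the set `P` of allocated items: some `v ∈ P` equals `u`
or has a directed path to `u`. -/
def Dominated {V : Type*} (A : V → V → Prop) (P : Set V) (u : V) : Prop :=
  ∃ v ∈ P, Relation.ReflTransGen A v u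

/-- Dissatisfaction of an agent receiving the set `P`: the number of vertices not
dominated by `P`. -/
noncomputable def diss {V : Type*} (A : V → V → Prop) (P : Set V) : ℕ :=
  {u : V | ¬ Dominated A P u}.ncard

/-- Satisfaction of an agent receiving the set `P`: the number of vertices
dominated by `P`. -/
noncomputable def sat {V : Type*} (A : V → V → Prop) (P : Set V) : ℕ :=
  {u : V | Dominated A P u}.ncard

/-- The directed graph with arc relation `A` is acyclic. -/
def Acyclic {V : Type*} (A : V → V → Prop) : Prop :=
  ∀ v, ¬ Relation.TransGen A v v

/-- `P` is an antichain: no vertex of `P` is reachable from another vertex of `P`. -/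
def IsAntichainIn {V : Type*} (A : V → V → Prop) (P : Set V) : Prop :=
  ∀ x ∈ P, ∀ y ∈ P, x ≠ y → ¬ Relation.ReflTransGen A x y

/-!
A source is dominated only by a bundle that contains it, so two disjoint bundles leave at least
`|S|` sources undominated between them, and one of the two agents misses at least `⌈|S|/2⌉`.
Conversely, split `S = X ∪ (S \ X)` into halves and give each agent its half together with the
sources of `G − S` that the half does not already dominate. Every source of `G − S` has a
predecessor in `X` or in `S \ X`, so the two bundles are disjoint; and by well-founded induction
along the arcs every vertex outside `S` is dominated by each bundle, so an agent misses only the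
sources outside its own half.
-/

namespace Dominated

variable {V : Type*} {A : V → V → Prop} {P Q : Set V} {u v : V}

lemma of_mem (hu : u ∈ P) : Dominated A P u := ⟨u, hu, .refl⟩

lemma mono (hPQ : P ⊆ Q) (hu : Dominated A P u) : Dominated A Q u :=
  let ⟨w, hw, hwu⟩ := hu; ⟨w, hPQ hw, hwu⟩

lemma tail (hu : Dominated A P u) (huv : A u v) : Dominated A P v :=
  let ⟨w, hw, hwu⟩ := hu; ⟨w, hw, hwu.tail huv⟩

end Dominated

section Allocation

variable {V : Type*} {A : V → V → Prop}

def sources (A : V → V → Prop) : Set V := {v | ∀ u, ¬ A u v}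

/-- The sources of `G − S`. -/
def secondSources (A : V → V → Prop) : Set V :=
  {v | v ∉ sources A ∧ ∀ u, A u v → u ∈ sources A}

def bundle (A : V → V → Prop) (X : Set V) : Set V :=
  X ∪ (secondSources A \ {u | Dominated A X u})

lemma Acyclic.wellFounded [Finite V] (hA : Acyclic A) : WellFounded A :=
  haveI : Std.Irrefl (Relation.TransGen A) := ⟨hA⟩
  Subrelation.wf Relation.TransGen.single (Finite.wellFounded_of_trans_of_irrefl _)

lemma dominated_iff_mem_of_mem_sources {P : Set V} {v : V} (hv : v ∈ sources A) :
    Dominated A P v ↔ v ∈ P := by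
  refine ⟨fun ⟨w, hw, hwv⟩ => ?_, Dominated.of_mem⟩
  rcases hwv.cases_tail with rfl | ⟨u, -, huv⟩
  · exact hw
  · exact absurd huv (hv u)

lemma ncard_sources_le_diss_add_diss [Finite V] {P Q : Set V} (hPQ : Disjoint P Q) :
    (sources A).ncard ≤ diss A P + diss A Q := by
  have hsub : sources A ⊆ {u | ¬ Dominated A P u} ∪ {u | ¬ Dominated A Q u} := by
    intro v hv
    simp only [Set.mem_union, Set.mem_ofPred_eq, dominated_iff_mem_of_mem_sources hv]
    by_contra! hvPQ
    exact hPQ.notMem_of_mem_left hvPQ.1 hvPQ.2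
  exact (Set.ncard_le_ncard hsub).trans (Set.ncard_union_le _ _)

lemma disjoint_bundle_sources_sdiff {X : Set V} (hX : X ⊆ sources A) :
    Disjoint (bundle A X) (bundle A (sources A \ X)) := by
  rw [Set.disjoint_left]
  rintro v (hvX | ⟨hv₂, hvX⟩) (hvY | ⟨hv₂', hvY⟩)
  · exact hvY.2 hvX
  · exact hv₂'.1 (hX hvX)
  · exact hv₂.1 hvY.1
  · obtain ⟨u, huv⟩ : ∃ u, A u v := by simpa [sources] using hv₂.1
    by_cases huX : u ∈ X
    · exact hvX ((Dominated.of_mem huX).tail huv)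
    · exact hvY ((Dominated.of_mem (Set.mem_sdiff_of_mem (hv₂.2 u huv) huX)).tail huv)

lemma dominated_bundle [Finite V] (hA : Acyclic A) (X : Set V) (v : V)
    (hv : v ∉ sources A \ X) : Dominated A (bundle A X) v := by
  induction v using hA.wellFounded.induction with
  | _ v ih =>
    by_cases hvS : v ∈ sources A
    · exact .of_mem (.inl (by simpa [hvS] using hv))
    by_cases hpred : ∃ u, A u v ∧ u ∉ sources A
    · obtain ⟨u, huv, huS⟩ := hpred
      exact (ih u huv fun hu => huS hu.1).tail huv
    have hv₂ : v ∈ secondSources A :=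
      ⟨hvS, fun u huv => by_contra fun huS => hpred ⟨u, huv, huS⟩⟩
    by_cases hvX : Dominated A X v
    · exact hvX.mono Set.subset_union_left
    · exact .of_mem (.inr ⟨hv₂, hvX⟩)

lemma diss_bundle_le [Finite V] (hA : Acyclic A) (X : Set V) :
    diss A (bundle A X) ≤ (sources A \ X).ncard :=
  Set.ncard_le_ncard fun v hv => by_contra fun h => hv (dominated_bundle hA X v h)

end Allocation

theorem stmt4 {V : Type*} [Fintype V] (A : V → V → Prop) (hA : Acyclic A) :
    (∃ π : Fin 2 → Set V, (∀ i j, i ≠ j → Disjoint (π i) (π j)) ∧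
      diss A (π 0) ≤ ({v : V | ∀ u, ¬ A u v}.ncard + 1) / 2 ∧
      diss A (π 1) ≤ ({v : V | ∀ u, ¬ A u v}.ncard + 1) / 2) ∧
    IsLeast {d : ℕ | ∃ π : Fin 2 → Set V, (∀ i j, i ≠ j → Disjoint (π i) (π j)) ∧
        max (diss A (π 0)) (diss A (π 1)) = d}
      (({v : V | ∀ u, ¬ A u v}.ncard + 1) / 2) := by
  change (∃ π : Fin 2 → Set V, _ ∧ _ ≤ ((sources A).ncard + 1) / 2 ∧ _) ∧
    IsLeast _ (((sources A).ncard + 1) / 2)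
  have lower (π : Fin 2 → Set V) (hπ : ∀ i j, i ≠ j → Disjoint (π i) (π j)) :
      ((sources A).ncard + 1) / 2 ≤ max (diss A (π 0)) (diss A (π 1)) := by
    have := ncard_sources_le_diss_add_diss (A := A) (hπ 0 1 (by decide))
    omega
  obtain ⟨X, hXS, hX⟩ := Set.exists_subset_card_eq (Nat.div_le_self (sources A).ncard 2)
  have h₀ : diss A (bundle A X) ≤ ((sources A).ncard + 1) / 2 := by
    have := diss_bundle_le hA X
    rw [Set.ncard_sdiff hXS, hX] at this
    omega
  have h₁ : diss A (bundle A (sources A \ X)) ≤ ((sources A).ncard + 1) / 2 := by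
    have := diss_bundle_le hA (sources A \ X)
    rw [Set.sdiff_sdiff_cancel_left hXS, hX] at this
    omega
  let π : Fin 2 → Set V := ![bundle A X, bundle A (sources A \ X)]
  have hπ : ∀ i j, i ≠ j → Disjoint (π i) (π j) := by
    have := disjoint_bundle_sources_sdiff hXS
    intro i j hij
    fin_cases i <;> fin_cases j <;> first | exact absurd rfl hij | exact this | exact this.symm
  exact ⟨⟨π, hπ, h₀, h₁⟩, ⟨π, hπ, le_antisymm (max_le h₀ h₁) (lower π hπ)⟩,
    fun d ⟨ρ, hρ, hd⟩ => hd ▸ lower ρ hρ⟩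
end

section
/- Let H be an undirected graph, k ≥ 3, and let G be the directed graph obtained from H by subdividing each edge e = {u,v} into a new vertex w_e with arcs (u, w_e), (v, w_e). If H admits a proper k-coloring, then there exists an allocation π of the vertices of G to k agents such that Σ_{i=1}^{k} δ_π(i) = k·|V(G)| − Σ_{v ∈ V(G)} |succ[v]|, i.e., the total dissatisfaction attains its minimum possible value. -/
/-- The subdivision orientation of an undirected graph `H`. -/
def SubdivArc {V : Type*} (H : SimpleGraph V) :
    (V ⊕ H.edgeSet) → (V ⊕ H.edgeSet) → Prop :=
  fun x y =>
    match x, y with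
    | Sum.inl u, Sum.inr e => u ∈ e.val
    | _, _ => False

/-!
Give each original vertex `u` the colour `c u` and each subdivision vertex `w_e` a colour
missing from both ends of `e`. Two distinct vertices of the same colour then have disjoint
closed successor sets: `succ[w_e] = {w_e}`, and two original vertices of the same colour are
not adjacent in `H`, so they have no common `w_e`. Hence every agent's satisfaction is the sum
of `|succ[v]|` over the vertices it receives, and summing `diss + sat = |V(G)|` over the `k`
agents gives the value.
-/

open Finset

section Domination

variable {W : Type*} (A : W → W → Prop)

def closedSucc (v : W) : Set W := {u | Relation.ReflTransGen A v u}

theorem mem_closedSucc {v u : W} : u ∈ closedSucc A v ↔ Relation.ReflTransGen A v u :=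
  Iff.rfl

variable [Fintype W]

theorem diss_add_sat (P : Set W) : diss A P + sat A P = Fintype.card W := by
  rw [diss, sat, add_comm, ← Nat.card_eq_fintype_card, ← Set.ncard_add_ncard_compl]
  rfl

theorem sat_eq_sum_ncard_closedSucc (s : Finset W)
    (hs : (s : Set W).PairwiseDisjoint (closedSucc A)) :
    sat A s = ∑ v ∈ s, (closedSucc A v).ncard := by
  classical
  have hdom : {u | Dominated A s u} = ↑(s.biUnion fun v => (closedSucc A v).toFinset) := by
    ext u
    simp [Dominated, mem_closedSucc]
  rw [sat, hdom, Set.ncard_coe_finset, card_biUnion]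
  · simp_rw [Set.ncard_eq_toFinset_card']
  · intro v hv w hw hvw
    simpa using hs hv hw hvw

theorem sum_diss_fiber_eq {ι : Type*} [Fintype ι] (f : W → ι)
    (hf : ∀ v w, v ≠ w → f v = f w → Disjoint (closedSucc A v) (closedSucc A w)) :
    ∑ i, diss A (f ⁻¹' {i}) =
      Fintype.card ι * Fintype.card W - ∑ v, (closedSucc A v).ncard := by
  classical
  have hsat : ∑ i, sat A (f ⁻¹' {i}) = ∑ v, (closedSucc A v).ncard := by
    rw [← sum_fiberwise univ f]
    refine sum_congr rfl fun i _ => ?_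
    have hfiber : f ⁻¹' {i} = ↑(univ.filter fun v => f v = i) := by ext; simp
    rw [hfiber, sat_eq_sum_ncard_closedSucc]
    intro v hv w hw hvw
    rw [mem_coe, mem_filter] at hv hw
    exact hf v w hvw (hv.2.trans hw.2.symm)
  have htotal : ∑ i, diss A (f ⁻¹' {i}) + ∑ i, sat A (f ⁻¹' {i}) =
      Fintype.card ι * Fintype.card W := by
    simp [← sum_add_distrib, diss_add_sat]
  omega

end Domination

section Subdivision

variable {V : Type*} {H : SimpleGraph V}

theorem subdivArc_reflTransGen_iff {v u : V ⊕ H.edgeSet} :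
    Relation.ReflTransGen (SubdivArc H) v u ↔ v = u ∨ SubdivArc H v u := by
  refine ⟨fun h => ?_, fun h => h.elim (fun h => h ▸ .refl) .single⟩
  induction h with
  | refl => exact .inl rfl
  | @tail x y _ hxy ih =>
    rcases ih with rfl | hvx
    · exact .inr hxy
    · rcases v with _ | _ <;> rcases x with _ | _ <;> rcases y with _ | _ <;>
        simp_all [SubdivArc]

@[simp]
theorem closedSucc_inr (e : H.edgeSet) :
    closedSucc (SubdivArc H) (.inr e) = {.inr e} := by
  ext (u | f) <;> simp [closedSucc, subdivArc_reflTransGen_iff, SubdivArc, eq_comm]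

@[simp]
theorem inl_mem_closedSucc_inl {a b : V} :
    Sum.inl b ∈ closedSucc (SubdivArc H) (.inl a) ↔ a = b := by
  simp [closedSucc, subdivArc_reflTransGen_iff, SubdivArc]

@[simp]
theorem inr_mem_closedSucc_inl {a : V} {e : H.edgeSet} :
    Sum.inr e ∈ closedSucc (SubdivArc H) (.inl a) ↔ a ∈ e.val := by
  simp [closedSucc, subdivArc_reflTransGen_iff, SubdivArc]

theorem disjoint_closedSucc_of_elim_eq {ι : Type*} {c : V → ι} {g : H.edgeSet → ι}
    (hc : ∀ u v, H.Adj u v → c u ≠ c v) (hg : ∀ e : H.edgeSet, ∀ u ∈ e.val, c u ≠ g e)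
    {v w : V ⊕ H.edgeSet} (hvw : v ≠ w) (hcol : Sum.elim c g v = Sum.elim c g w) :
    Disjoint (closedSucc (SubdivArc H) v) (closedSucc (SubdivArc H) w) := by
  rw [Set.disjoint_left]
  rintro (b | e) hv hw
  · rcases v with a | e₁ <;> rcases w with a' | e₂ <;> simp_all
  · rcases v with a | e₁ <;> rcases w with a' | e₂ <;> simp only [Sum.elim_inl, Sum.elim_inr,
      closedSucc_inr, inr_mem_closedSucc_inl, Set.mem_singleton_iff, Sum.inr.injEq] at hv hw hcol
    · have hne : a ≠ a' := fun h => hvw (h ▸ rfl)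
      exact hc a a' (H.adj_iff_exists_edge.2 ⟨hne, e, e.2, hv, hw⟩) hcol
    · exact hg e₂ a (hw ▸ hv) hcol
    · exact hg e₁ a' (hv ▸ hw) hcol.symm
    · exact hvw (by rw [← hv, ← hw])

end Subdivision

theorem Sym2.exists_ne_of_mem {α ι : Type*} (hι : 3 ≤ Cardinal.mk ι) (c : α → ι) (e : Sym2 α) :
    ∃ i, ∀ u ∈ e, c u ≠ i := by
  induction e using Sym2.ind with
  | _ a b =>
    obtain ⟨i, hia, hib⟩ := Cardinal.exists_ne_ne_of_three_le hι (c a) (c b)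
    refine ⟨i, fun u hu => ?_⟩
    rcases Sym2.mem_iff.1 hu with rfl | rfl
    exacts [hia.symm, hib.symm]

theorem stmt9_general {V : Type*} [Fintype V]
    (H : SimpleGraph V) [DecidableRel H.Adj]
    (k : ℕ) (hk : 3 ≤ k)
    (c : V → Fin k) (hc : ∀ u v, H.Adj u v → c u ≠ c v) :
    ∃ π : Fin k → Set (V ⊕ H.edgeSet),
      (∀ i j, i ≠ j → Disjoint (π i) (π j)) ∧
      ∑ i, diss (SubdivArc H) (π i) =
        k * Fintype.card (V ⊕ H.edgeSet) -
          ∑ v : V ⊕ H.edgeSet,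
            {u : V ⊕ H.edgeSet | Relation.ReflTransGen (SubdivArc H) v u}.ncard := by
  choose g hg using fun e : H.edgeSet => Sym2.exists_ne_of_mem (by simpa using hk) c e.val
  refine ⟨fun i => Sum.elim c g ⁻¹' {i},
    fun i j hij => (Set.disjoint_singleton.2 hij).preimage _, ?_⟩
  have h := sum_diss_fiber_eq (SubdivArc H) (Sum.elim c g)
    fun _ _ => disjoint_closedSucc_of_elim_eq hc hg
  rwa [Fintype.card_fin] at h

theorem stmt9 {V : Type*} [Fintype V] [DecidableEq V]
    (H : SimpleGraph V) [DecidableRel H.Adj]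
    (k : ℕ) (hk : 3 ≤ k)
    (c : V → Fin k) (hc : ∀ u v, H.Adj u v → c u ≠ c v) :
    ∃ π : Fin k → Set (V ⊕ H.edgeSet),
      (∀ i j, i ≠ j → Disjoint (π i) (π j)) ∧
      ∑ i, diss (SubdivArc H) (π i) =
        k * Fintype.card (V ⊕ H.edgeSet) -
          ∑ v : V ⊕ H.edgeSet,
            {u : V ⊕ H.edgeSet | Relation.ReflTransGen (SubdivArc H) v u}.ncard :=
  stmt9_general H k hk c hc
end

section
/- Let G be the disjoint union of three directed paths, each with exactly k vertices, and consider k agents. Then for every allocation π, max_{i} δ_π(i) ≥ ⌈3(k−1)/2⌉. -/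
/-- Arc relation of a disjoint union of directed paths: within each component
`c`, vertex `j` points to vertex `j+1`. -/
def PathsArc (c k : ℕ) : Fin c × Fin k → Fin c × Fin k → Prop :=
  fun p q => p.1 = q.1 ∧ (p.2 : ℕ) + 1 = (q.2 : ℕ)

open Finset

lemma reach_mono {k : ℕ} {v u : Fin 3 × Fin k}
    (h : Relation.ReflTransGen (PathsArc 3 k) v u) :
    v.1 = u.1 ∧ (v.2 : ℕ) ≤ (u.2 : ℕ) := by
  induction h with
  | refl => exact ⟨rfl, le_refl _⟩
  | tail _ hstep ih =>
    obtain ⟨h1, h2⟩ := hstep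
    exact ⟨ih.1.trans h1, by omega⟩

lemma filter_card {k : ℕ} (c : Fin 3) (j : Fin k) :
    (univ.filter fun u : Fin 3 × Fin k => u.1 = c ∧ (j : ℕ) ≤ (u.2 : ℕ)).card
      = k - (j : ℕ) := by
  have h : (univ.filter fun u : Fin 3 × Fin k => u.1 = c ∧ (j : ℕ) ≤ (u.2 : ℕ))
      = {c} ×ˢ (Finset.Ici j) := by
    ext u
    simp only [Finset.mem_filter, Finset.mem_univ, true_and, Finset.mem_product,
      Finset.mem_singleton, Finset.mem_Ici, Fin.le_def]
  rw [h, Finset.card_product, Finset.card_singleton, one_mul, Fin.card_Ici]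

lemma sat_le {k : ℕ} (P : Set (Fin 3 × Fin k)) :
    sat (PathsArc 3 k) P ≤ ∑ v ∈ P.toFinite.toFinset, (k - (v.2 : ℕ)) := by
  classical
  have hD : {u | Dominated (PathsArc 3 k) P u}.Finite := Set.toFinite _
  rw [sat, Set.ncard_eq_toFinset_card _ hD]
  have hsub : hD.toFinset ⊆ P.toFinite.toFinset.biUnion
      (fun v => univ.filter fun u : Fin 3 × Fin k => u.1 = v.1 ∧ (v.2 : ℕ) ≤ (u.2 : ℕ)) := by
    intro u hu
    rw [Set.Finite.mem_toFinset] at hu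
    obtain ⟨v, hv, hreach⟩ := hu
    rw [Finset.mem_biUnion]
    refine ⟨v, by simpa using hv, ?_⟩
    simp only [Finset.mem_filter, Finset.mem_univ, true_and]
    exact ⟨(reach_mono hreach).1.symm, (reach_mono hreach).2⟩
  calc hD.toFinset.card ≤ _ := Finset.card_le_card hsub
    _ ≤ ∑ v ∈ P.toFinite.toFinset,
        (univ.filter fun u : Fin 3 × Fin k => u.1 = v.1 ∧ (v.2 : ℕ) ≤ (u.2 : ℕ)).card :=
      Finset.card_biUnion_le
    _ = ∑ v ∈ P.toFinite.toFinset, (k - (v.2 : ℕ)) := by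
      refine Finset.sum_congr rfl fun v _ => filter_card v.1 v.2

theorem stmt12 (k : ℕ) (hk : 1 ≤ k)
    (π : Fin k → Set (Fin 3 × Fin k))
    (hdisj : ∀ i j, i ≠ j → Disjoint (π i) (π j)) :
    (3 * (k - 1) + 1) / 2 ≤ Finset.univ.sup fun i => diss (PathsArc 3 k) (π i) := by
  classical
  set S := Finset.univ.sup fun i => diss (PathsArc 3 k) (π i) with hS
  have hsum_sat : ∑ i : Fin k, sat (PathsArc 3 k) (π i)
      ≤ ∑ v : Fin 3 × Fin k, (k - (v.2 : ℕ)) := by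
    have hdisj' : ∀ i ∈ (univ : Finset (Fin k)), ∀ j ∈ (univ : Finset (Fin k)), i ≠ j →
        Disjoint ((π i).toFinite.toFinset) ((π j).toFinite.toFinset) := by
      intro i _ j _ hij
      rw [Set.Finite.disjoint_toFinset]
      exact hdisj i j hij
    calc ∑ i : Fin k, sat (PathsArc 3 k) (π i)
        ≤ ∑ i : Fin k, ∑ v ∈ (π i).toFinite.toFinset, (k - (v.2 : ℕ)) :=
          Finset.sum_le_sum fun i _ => sat_le (π i)
      _ = ∑ v ∈ univ.biUnion (fun i => (π i).toFinite.toFinset), (k - (v.2 : ℕ)) :=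
          (Finset.sum_biUnion hdisj').symm
      _ ≤ ∑ v : Fin 3 × Fin k, (k - (v.2 : ℕ)) :=
          Finset.sum_le_sum_of_subset (Finset.subset_univ _)
  have hT : 2 * ∑ v : Fin 3 × Fin k, (k - (v.2 : ℕ)) = 3 * (k * (k + 1)) := by
    have e1 : ∑ v : Fin 3 × Fin k, (k - (v.2 : ℕ)) = 3 * ∑ j ∈ Finset.range k, (k - j) := by
      rw [Fintype.sum_prod_type]
      simp [Fin.sum_univ_eq_sum_range (fun j => k - j)]
    have e2 : ∑ j ∈ Finset.range k, (k - j) = ∑ j ∈ Finset.range k, (j + 1) := by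
      rw [← Finset.sum_range_reflect]
      refine Finset.sum_congr rfl fun j hj => ?_
      rw [Finset.mem_range] at hj
      omega
    have e3 : (∑ j ∈ Finset.range k, j) * 2 = k * (k - 1) := Finset.sum_range_id_mul_two k
    rw [e1, e2, Finset.sum_add_distrib, Finset.sum_const, Finset.card_range, smul_eq_mul, mul_one]
    cases k with
    | zero => simp
    | succ n =>
      simp only [Nat.add_sub_cancel] at e3
      nlinarith [e3]
  have hds : ∀ i : Fin k, diss (PathsArc 3 k) (π i) + sat (PathsArc 3 k) (π i) = 3 * k := by
    intro i
    have hc : {u : Fin 3 × Fin k | ¬ Dominated (PathsArc 3 k) (π i) u}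
        = {u | Dominated (PathsArc 3 k) (π i) u}ᶜ := rfl
    rw [diss, sat, hc, add_comm, Set.ncard_add_ncard_compl]
    simp [Nat.card_eq_fintype_card]
  have hsum_ds : ∑ i : Fin k, diss (PathsArc 3 k) (π i)
      + ∑ i : Fin k, sat (PathsArc 3 k) (π i) = k * (3 * k) := by
    rw [← Finset.sum_add_distrib]
    simp [hds, Finset.sum_const]
  have hle : ∑ i : Fin k, diss (PathsArc 3 k) (π i) ≤ k * S := by
    calc ∑ i : Fin k, diss (PathsArc 3 k) (π i) ≤ ∑ _i : Fin k, S :=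
        Finset.sum_le_sum fun i _ => Finset.le_sup (f := fun i => diss (PathsArc 3 k) (π i))
          (Finset.mem_univ i)
      _ = k * S := by simp [Finset.sum_const, mul_comm]
  obtain ⟨m, rfl⟩ : ∃ m, k = m + 1 := ⟨k - 1, by omega⟩
  simp only [Nat.add_sub_cancel]
  have key : 3 * m ≤ 2 * S := by
    have h2 : 2 * ∑ i : Fin (m+1), sat (PathsArc 3 (m+1)) (π i)
        ≤ 3 * ((m + 1) * (m + 1 + 1)) := by
      rw [← hT]
      omega
    have h3 : (m + 1) * (3 * m) ≤ (m + 1) * (2 * S) := by nlinarith [hsum_ds, hle, h2]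
    exact Nat.le_of_mul_le_mul_left h3 (Nat.succ_pos m)
  omega
end

section
/- Let G be the disjoint union of two directed paths u₁ → ... → u_k and w₁ → ... → w_k, each with k vertices, and consider k agents. The allocation assigning to agent i the items u_i and w_{k+1−i} achieves dissatisfaction exactly (i − 1) + (k − i) = k − 1 for every agent i, and this is optimal: no allocation achieves maximum dissatisfaction less than k − 1. -/
/-- The allocation giving agent `i` the items `u_i` and `w_{k+1-i}` on the two paths. -/
def TwoPathAlloc (k : ℕ) (i : Fin k) : Set (Fin 2 × Fin k) :=
  {((0 : Fin 2), i), ((1 : Fin 2), i.rev)}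

open Finset Function

section Domination

variable {V ι : Type*} (A : V → V → Prop)

theorem sat_add_diss [Finite V] (P : Set V) : sat A P + diss A P = Nat.card V :=
  Set.ncard_add_ncard_compl _

open scoped Classical in
theorem card_dominating_le_card_ancestors [Fintype ι] [Fintype V] {π : ι → Set V}
    (hπ : Pairwise (Disjoint on π)) (u : V) :
    #{i | Dominated A (π i) u} ≤ #{v | Relation.ReflTransGen A v u} := by
  let owned (i : ι) : Finset V := {v | v ∈ π i ∧ Relation.ReflTransGen A v u}
  calc #{i | Dominated A (π i) u}
      ≤ #(Finset.biUnion {i | Dominated A (π i) u} owned) := by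
        refine card_le_card_biUnion (fun i _ j _ hij => ?_) fun i hi => ?_
        · exact disjoint_left.2 fun v hvi hvj =>
            Set.disjoint_left.1 (hπ hij) (mem_filter.1 hvi).2.1 (mem_filter.1 hvj).2.1
        · obtain ⟨v, hv, hvu⟩ := (mem_filter.1 hi).2
          exact ⟨v, by simp [owned, hv, hvu]⟩
    _ ≤ #{v | Relation.ReflTransGen A v u} :=
        card_le_card fun v hv => by
          obtain ⟨_, _, _, hvu⟩ := by simpa [owned] using hv
          simpa using hvu

open scoped Classical in
theorem sat_eq_card_filter [Fintype V] (P : Set V) : sat A P = #{u | Dominated A P u} := by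
  rw [sat, Set.ncard_eq_toFinset_card', Set.toFinset_ofPred]

open scoped Classical in
theorem card_mul_card_le_sum_diss_add_sum_card_ancestors [Fintype ι] [Fintype V]
    {π : ι → Set V} (hπ : Pairwise (Disjoint on π)) :
    Fintype.card ι * Fintype.card V ≤
      ∑ i, diss A (π i) + ∑ u, #{v | Relation.ReflTransGen A v u} := by
  have sum_sat : ∑ i, sat A (π i) = ∑ u, #{i | Dominated A (π i) u} := by
    simp only [sat_eq_card_filter]
    exact sum_card_bipartiteAbove_eq_sum_card_bipartiteBelow _
  calc Fintype.card ι * Fintype.card V = ∑ i, (sat A (π i) + diss A (π i)) := by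
        simp [sat_add_diss, Nat.card_eq_fintype_card]
    _ = ∑ i, diss A (π i) + ∑ u, #{i | Dominated A (π i) u} := by
        rw [sum_add_distrib, sum_sat, add_comm]
    _ ≤ _ := by
        gcongr with u
        exact card_dominating_le_card_ancestors A hπ u

end Domination

theorem disjoint_graph_of_forall_ne {α β : Type*} {f g : α → β} (h : ∀ a, f a ≠ g a) :
    Disjoint f.graph g.graph :=
  Set.disjoint_left.2 fun ⟨a, _⟩ hf hg => h a (hf.trans hg.symm)

section Paths

variable {c k : ℕ}

theorem reflTransGen_pathsArc_iff {p q : Fin c × Fin k} :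
    Relation.ReflTransGen (PathsArc c k) p q ↔ p.1 = q.1 ∧ p.2 ≤ q.2 := by
  constructor
  · intro h
    induction h with
    | refl => exact ⟨rfl, le_rfl⟩
    | tail _ hstep ih =>
      exact ⟨ih.1.trans hstep.1, ih.2.trans (Fin.le_def.2 (by have := hstep.2; omega))⟩
  · obtain ⟨a, i⟩ := p
    obtain ⟨b, j, hj⟩ := q
    rintro ⟨rfl, hle : (i : ℕ) ≤ j⟩
    induction j, hle using Nat.le_induction with
    | base => rfl
    | succ n _ ih => exact .tail (ih (by omega)) ⟨rfl, rfl⟩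

open scoped Classical in
theorem card_ancestors_pathsArc (u : Fin c × Fin k) :
    #{v | Relation.ReflTransGen (PathsArc c k) v u} = u.2 + 1 := by
  have : ({v | Relation.ReflTransGen (PathsArc c k) v u} : Finset _) =
      (Iic u.2).map ⟨(u.1, ·), Prod.mk_right_injective u.1⟩ := by
    ext ⟨a, m⟩
    simp [reflTransGen_pathsArc_iff, eq_comm, and_comm]
  rw [this, card_map, Fin.card_Iic]

open scoped Classical in
theorem sum_card_ancestors_pathsArc :
    2 * ∑ u : Fin c × Fin k, #{v | Relation.ReflTransGen (PathsArc c k) v u} =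
      c * (k * (k + 1)) := by
  have gauss : 2 * ∑ m : Fin k, ((m : ℕ) + 1) = k * (k + 1) := by
    have := sum_range_id_mul_two (k + 1)
    rw [sum_range_succ', add_zero, Nat.add_sub_cancel] at this
    rw [Fin.sum_univ_eq_sum_range (· + 1)]
    linarith
  simp only [card_ancestors_pathsArc, Fintype.sum_prod_type, sum_const, card_univ,
    Fintype.card_fin, smul_eq_mul]
  rw [mul_left_comm, gauss]

theorem dominated_pathsArc_graph_iff (f : Fin c → Fin k) (u : Fin c × Fin k) :
    Dominated (PathsArc c k) f.graph u ↔ f u.1 ≤ u.2 := by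
  simp [Dominated, reflTransGen_pathsArc_iff]

theorem diss_pathsArc_graph (f : Fin c → Fin k) :
    diss (PathsArc c k) f.graph = ∑ a, (f a : ℕ) := by
  classical
  simp only [diss, dominated_pathsArc_graph_iff, not_le]
  rw [Set.ncard_eq_toFinset_card', Set.toFinset_ofPred, card_filter, Fintype.sum_prod_type]
  simp only [← card_filter, filter_gt_eq_Iio, Fin.card_Iio]

end Paths

theorem twoPathAlloc_eq_graph (k : ℕ) (i : Fin k) :
    TwoPathAlloc k i = Function.graph ![i, i.rev] := by
  ext ⟨a, m⟩
  fin_cases a <;> simp [TwoPathAlloc, eq_comm]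

theorem disjoint_twoPathAlloc {k : ℕ} {i j : Fin k} (hij : i ≠ j) :
    Disjoint (TwoPathAlloc k i) (TwoPathAlloc k j) := by
  rw [twoPathAlloc_eq_graph, twoPathAlloc_eq_graph]
  refine disjoint_graph_of_forall_ne fun a => ?_
  fin_cases a
  · exact hij
  · exact Fin.rev_injective.ne hij

theorem diss_twoPathAlloc (k : ℕ) (i : Fin k) :
    diss (PathsArc 2 k) (TwoPathAlloc k i) = k - 1 := by
  rw [twoPathAlloc_eq_graph, diss_pathsArc_graph, Fin.sum_univ_two]
  simp only [Matrix.cons_val_zero, Matrix.cons_val_one, Fin.val_rev]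
  omega

theorem stmt13_general (k : ℕ) :
    (∀ i j : Fin k, i ≠ j → Disjoint (TwoPathAlloc k i) (TwoPathAlloc k j)) ∧
    (∀ i : Fin k, diss (PathsArc 2 k) (TwoPathAlloc k i) = k - 1) ∧
    (∀ π : Fin k → Set (Fin 2 × Fin k), (∀ i j, i ≠ j → Disjoint (π i) (π j)) →
      k - 1 ≤ Finset.univ.sup fun i => diss (PathsArc 2 k) (π i)) := by
  refine ⟨fun i j => disjoint_twoPathAlloc, diss_twoPathAlloc k, fun π hπ => ?_⟩
  set maxDiss := univ.sup fun i => diss (PathsArc 2 k) (π i)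
  have counting := card_mul_card_le_sum_diss_add_sum_card_ancestors (PathsArc 2 k) hπ
  have ancestors := sum_card_ancestors_pathsArc (c := 2) (k := k)
  have averaging : ∑ i, diss (PathsArc 2 k) (π i) ≤ k * maxDiss := by
    have := sum_le_card_nsmul univ _ maxDiss fun i hi => le_sup (f := fun i => diss _ (π i)) hi
    rwa [card_univ, Fintype.card_fin, smul_eq_mul] at this
  simp only [Fintype.card_fin, Fintype.card_prod] at counting
  rcases k with _ | k
  · exact Nat.zero_le _
  · rw [Nat.add_sub_cancel]
    refine Nat.le_of_mul_le_mul_left (?_ : (k + 1) * k ≤ (k + 1) * maxDiss) k.succ_pos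
    nlinarith

theorem stmt13 (k : ℕ) (hk : 1 ≤ k) :
    (∀ i j : Fin k, i ≠ j → Disjoint (TwoPathAlloc k i) (TwoPathAlloc k j)) ∧
    (∀ i : Fin k, diss (PathsArc 2 k) (TwoPathAlloc k i) = k - 1) ∧
    (∀ π : Fin k → Set (Fin 2 × Fin k), (∀ i j, i ≠ j → Disjoint (π i) (π j)) →
      k - 1 ≤ Finset.univ.sup fun i => diss (PathsArc 2 k) (π i)) :=
  stmt13_general k
end

section
/- Let G = (V, A) be an out-tree rooted at u with out-neighbors v₁, ..., v_q of u, and let π be an allocation to k agents of the vertices of G such that u ∈ π(j) for some agent j and no other vertex of G is in π(j). Then δ_π(j) = 0, and for every agent j' ≠ j, δ_π(j') = 1 + Σ_{i=1}^{q} δ_{π_i}(j'), where π_i is the restriction of π to the sub-out-tree T_{v_i} rooted at v_i and δ_{π_i}(j') is the dissatisfaction of agent j' within T_{v_i}. -/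
open Relation

private lemma anc_comparable {V : Type*} {A : V → V → Prop} {u : V}
    (hu_src : ∀ w, ¬ A w u) (hindeg : ∀ v, v ≠ u → ∃! w, A w v) :
    ∀ {a x b : V}, ReflTransGen A a x → ReflTransGen A b x →
      ReflTransGen A a b ∨ ReflTransGen A b a := by
  intro a x b hax
  induction hax with
  | refl => exact fun hb => Or.inr hb
  | @tail c x hac hcx ih =>
    intro hbx
    rcases hbx.cases_tail with rfl | ⟨c', hbc', hc'x⟩
    · exact Or.inl (hac.tail hcx)
    · have hxu : x ≠ u := fun h => hu_src c (h ▸ hcx)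
      obtain ⟨w, _, huniq⟩ := hindeg x hxu
      have hcc : c' = c := (huniq c' hc'x).trans (huniq c hcx).symm
      exact ih (hcc ▸ hbc')

private lemma ncard_biUnion' {α β : Type*} [Fintype β] (s : Finset α) (f : α → Set β)
    (h : ∀ a ∈ s, ∀ b ∈ s, a ≠ b → Disjoint (f a) (f b)) :
    (⋃ a ∈ s, f a).ncard = ∑ a ∈ s, (f a).ncard := by
  classical
  induction s using Finset.induction with
  | empty => simp
  | @insert a s ha ih =>
    rw [Finset.set_biUnion_insert, Finset.sum_insert ha,
      Set.ncard_union_eq ?_ (Set.toFinite _) (Set.toFinite _),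
      ih (fun x hx y hy => h x (Finset.mem_insert_of_mem hx) y (Finset.mem_insert_of_mem hy))]
    rw [Set.disjoint_iUnion_right]
    intro b
    rw [Set.disjoint_iUnion_right]
    intro hb
    exact h a (Finset.mem_insert_self a s) b (Finset.mem_insert_of_mem hb)
      (fun hab => ha (hab ▸ hb))

private lemma reach_u_eq {V : Type*} {A : V → V → Prop} {u : V}
    (hu_src : ∀ w, ¬ A w u) {w : V} (h : ReflTransGen A w u) : w = u := by
  rcases h.cases_tail with rfl | ⟨c, _, hcu⟩
  · rfl
  · exact absurd hcu (hu_src c)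

private lemma child_eq {V : Type*} {A : V → V → Prop} {u : V} (hA : Acyclic A)
    (hu_src : ∀ w, ¬ A w u)
    (hindeg : ∀ v, v ≠ u → ∃! w, A w v) {v v' : V}
    (hv : A u v) (hv' : A u v') (h : ReflTransGen A v' v) : v' = v := by
  rcases h.cases_tail with rfl | ⟨c, hv'c, hcv⟩
  · rfl
  · have hvu : v ≠ u := fun h => hu_src u (h ▸ hv)
    obtain ⟨w, _, huniq⟩ := hindeg v hvu
    have hc : c = u := (huniq c hcv).trans (huniq u hv).symm
    have hv'u : v' = u := reach_u_eq hu_src (hc ▸ hv'c)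
    exact absurd (hv'u ▸ hv') (hu_src u)

theorem stmt14 {V : Type*} [Fintype V] (A : V → V → Prop) [DecidableRel A]
    (hA : Acyclic A) (u : V)
    (hroot : ∀ v, Relation.ReflTransGen A u v)
    (hu_src : ∀ w, ¬ A w u)
    (hindeg : ∀ v, v ≠ u → ∃! w, A w v)
    (k : ℕ) (π : Fin k → Set V) (hdisj : ∀ i j, i ≠ j → Disjoint (π i) (π j))
    (j : Fin k) (hj : π j = {u}) :
    diss A (π j) = 0 ∧
    ∀ j', j' ≠ j →
      diss A (π j') = 1 + ∑ v ∈ Finset.univ.filter (fun v => A u v),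
        {x : V | Relation.ReflTransGen A v x ∧
          ¬ ∃ w, w ∈ π j' ∧ Relation.ReflTransGen A v w ∧
            Relation.ReflTransGen A w x}.ncard := by
  classical
  constructor
  · rw [diss, hj, Set.ncard_eq_zero (Set.toFinite _)]
    ext x
    simp only [Set.mem_setOf_eq, Set.mem_empty_iff_false, iff_false, not_not]
    exact ⟨u, rfl, hroot x⟩
  · intro j' hj'
    have hu' : u ∉ π j' := fun h =>
      (hdisj j' j hj').le_bot ⟨h, hj ▸ rfl⟩
    set S : V → Set V := fun v => {x : V | Relation.ReflTransGen A v x ∧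
          ¬ ∃ w, w ∈ π j' ∧ Relation.ReflTransGen A v w ∧
            Relation.ReflTransGen A w x} with hS
    set ch : Finset V := Finset.univ.filter (fun v => A u v) with hch
    have hkey : {x : V | ¬ Dominated A (π j') x} = insert u (⋃ v ∈ ch, S v) := by
      ext x
      simp only [Set.mem_setOf_eq, Set.mem_insert_iff, Set.mem_iUnion, exists_prop]
      constructor
      · intro hx
        by_cases hxu : x = u
        · exact Or.inl hxu
        · right
          rcases (hroot x).cases_head with rfl | ⟨v, huv, hvx⟩
          · exact absurd rfl hxu
          · refine ⟨v, Finset.mem_filter.2 ⟨Finset.mem_univ v, huv⟩, hvx, ?_⟩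
            rintro ⟨w, hw, _, hwx⟩
            exact hx ⟨w, hw, hwx⟩
      · rintro (rfl | ⟨v, hv, hvx, hnd⟩)
        · rintro ⟨w, hw, hwx⟩
          exact hu' (reach_u_eq hu_src hwx ▸ hw)
        · have huv : A u v := (Finset.mem_filter.1 hv).2
          rintro ⟨w, hw, hwx⟩
          have hwu : w ≠ u := fun h => hu' (h ▸ hw)
          rcases (anc_comparable hu_src hindeg hvx hwx) with hvw | hwv
          · exact hnd ⟨w, hw, hvw, hwx⟩
          · rcases (hroot w).cases_head with rfl | ⟨v', huv', hv'w⟩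
            · exact hwu rfl
            · have hv'v : v' = v := child_eq hA hu_src hindeg huv huv' (hv'w.trans hwv)
              subst hv'v
              have hwv' : w = v' := by
                by_contra hne
                rcases hv'w.cases_head with h | ⟨c, hvc, hcw⟩
                · exact hne h.symm
                · exact hA v' (Relation.TransGen.head' hvc (hcw.trans hwv))
              subst hwv'
              exact hnd ⟨w, hw, Relation.ReflTransGen.refl, hwx⟩
    have hdisjS : ∀ a ∈ ch, ∀ b ∈ ch, a ≠ b → Disjoint (S a) (S b) := by
      intro a ha b hb hab
      rw [Set.disjoint_left]
      intro x hxa hxb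
      have hua : A u a := (Finset.mem_filter.1 ha).2
      have hub : A u b := (Finset.mem_filter.1 hb).2
      rcases anc_comparable hu_src hindeg hxa.1 hxb.1 with h | h
      · exact hab (child_eq hA hu_src hindeg hub hua h)
      · exact hab (child_eq hA hu_src hindeg hua hub h).symm
    have hunot : u ∉ ⋃ v ∈ ch, S v := by
      simp only [Set.mem_iUnion, exists_prop, not_exists]
      rintro v ⟨hv, hvu⟩
      have huv : A u v := (Finset.mem_filter.1 hv).2
      have hvu' : v = u := reach_u_eq hu_src hvu.1
      exact hu_src u (hvu' ▸ huv)
    rw [diss, hkey, Set.ncard_insert_of_notMem hunot (Set.toFinite _),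
      ncard_biUnion' ch S hdisjS]
    exact Nat.add_comm _ 1
end
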